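/- Over an algebraically closed field with r ≠ 0, det(circ_r(c_0, ..., c_{n−1})) = Π_{ω: ω^n = r} (c_0 + c_1·ω + ⋯ + c_{n−1}·ω^{n−1}), the product taken over all n-th roots ω of r. -/

import Mathlib

open Matrix

/-- The `r`-circulant matrix with first row `c 0, c 1, …, c (n-1)`:
its `(i,j)` entry is `c (j - i)` if `i ≤ j` and `r * c (n + j - i)` if `j < i`. -/
def rCirc {R : Type*} [CommRing R] {n : ℕ} (r : R) (c : Fin n → R) :
    Matrix (Fin n) (Fin n) R :=
  Matrix.of fun i j =>
    if h : (i : ℕ) ≤ (j : ℕ) then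
      c ⟨(j : ℕ) - (i : ℕ), lt_of_le_of_lt (Nat.sub_le _ _) j.isLt⟩
    else r * c ⟨n + (j : ℕ) - (i : ℕ), by have hi := i.isLt; have hj := j.isLt; omega⟩


open Polynomial

/-! If `ω ^ n = r`, the vector `(ω ^ m)ₘ` is an eigenvector of `circ_r(c)` with eigenvalue
`∑ c k ω ^ k`: shifting a row past the last column multiplies by `r = ω ^ n`. The `n` distinct
roots of `Xⁿ - r` give an invertible Vandermonde matrix whose columns are these eigenvectors,
so `circ_r(c)` is diagonalized and its determinant is the product of the eigenvalues. -/

section rCirc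

variable {R : Type*} [CommRing R] {n : ℕ} {r x : R} (c : Fin n → R)

lemma rCirc_apply_add_mul_pow [NeZero n] (hx : x ^ n = r) (i k : Fin n) :
    rCirc r c i (i + k) * x ^ ((i + k : Fin n) : ℕ) = c k * x ^ ((i : ℕ) + k) := by
  have hik : (i : ℕ) + k < 2 * n := by omega
  simp only [rCirc, Matrix.of_apply, Fin.val_add]
  rcases lt_or_ge ((i : ℕ) + k) n with h | h
  · have hmod : ((i : ℕ) + k) % n = i + k := Nat.mod_eq_of_lt h
    have hk : (⟨((i : ℕ) + k) % n - i, by omega⟩ : Fin n) = k :=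
      Fin.ext (by simp only [hmod]; omega)
    rw [dif_pos (by omega), hk, hmod]
  · have hmod : ((i : ℕ) + k) % n = i + k - n := by
      rw [Nat.mod_eq_sub_mod h, Nat.mod_eq_of_lt (by omega)]
    rw [dif_neg (by omega)]
    have hwrap : x ^ ((i : ℕ) + k) = r * x ^ ((i : ℕ) + k - n) := by
      rw [← hx, ← pow_add]; congr 1; omega
    have hk : (⟨n + ((i : ℕ) + k) % n - i, by omega⟩ : Fin n) = k :=
      Fin.ext (by simp only [hmod]; omega)
    rw [hk, hwrap, hmod]; ring

theorem rCirc_mulVec_powers (hx : x ^ n = r) :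
    rCirc r c *ᵥ (fun m : Fin n => x ^ (m : ℕ)) =
      (∑ k : Fin n, c k * x ^ (k : ℕ)) • fun m : Fin n => x ^ (m : ℕ) := by
  ext i
  have : NeZero n := NeZero.of_pos i.pos
  rw [mulVec, dotProduct, ← Equiv.sum_comp (Equiv.addLeft i)]
  simp only [Equiv.coe_addLeft, rCirc_apply_add_mul_pow c hx, Pi.smul_apply, smul_eq_mul,
    Finset.sum_mul, pow_add]
  exact Finset.sum_congr rfl fun k _ => by ring

theorem rCirc_mul_vandermonde_transpose {ω : Fin n → R} (hω : ∀ j, ω j ^ n = r) :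
    rCirc r c * (vandermonde ω)ᵀ =
      (vandermonde ω)ᵀ * diagonal fun j => ∑ k : Fin n, c k * ω j ^ (k : ℕ) := by
  ext i j
  rw [mul_diagonal]
  simpa [mul_apply, vandermonde_apply, mulVec, dotProduct, mul_comm] using
    congrFun (rCirc_mulVec_powers c (hω j)) i

theorem det_rCirc_eq_prod_of_injective [IsDomain R] {ω : Fin n → R}
    (hinj : Function.Injective ω) (hω : ∀ j, ω j ^ n = r) :
    (rCirc r c).det = ∏ j : Fin n, ∑ k : Fin n, c k * ω j ^ (k : ℕ) := by
  have hV : (vandermonde ω)ᵀ.det ≠ 0 := by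
    rwa [det_transpose, det_vandermonde_ne_zero_iff]
  have hdet := congrArg det (rCirc_mul_vandermonde_transpose c hω)
  rw [det_mul, det_mul, det_diagonal, mul_comm (vandermonde ω)ᵀ.det] at hdet
  exact mul_right_cancel₀ hV hdet

theorem det_rCirc_eq_prod_of_card_eq [IsDomain R] {S : Finset R} (hcard : S.card = n)
    (hS : ∀ x ∈ S, x ^ n = r) :
    (rCirc r c).det = ∏ x ∈ S, ∑ k : Fin n, c k * x ^ (k : ℕ) := by
  let e := S.equivFinOfCardEq hcard
  rw [det_rCirc_eq_prod_of_injective c (ω := fun j => (e.symm j : R))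
    (Subtype.val_injective.comp e.symm.injective) fun j => hS _ (e.symm j).2,
    ← S.prod_coe_sort, ← e.symm.prod_comp]

end rCirc

theorem det_rCirc_eq_prod_roots_general {F : Type*} [Field F] [IsAlgClosed F]
    {n : ℕ} (r : F)
    (hsep : (X ^ n - C r : F[X]).Separable) (c : Fin n → F) :
    (rCirc r c).det =
      (((X ^ n - C r : F[X]).roots).map
        (fun ω => ∑ k : Fin n, c k * ω ^ (k : ℕ))).prod := by
  let S : Finset F := ⟨(X ^ n - C r : F[X]).roots, nodup_roots hsep⟩
  have hcard : S.card = n := by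
    rw [Finset.card_mk, IsAlgClosed.card_roots_eq_natDegree, natDegree_X_pow_sub_C]
  have hS : ∀ x ∈ S, x ^ n = r := fun x hx => by
    simpa [sub_eq_zero] using isRoot_of_mem_roots hx
  exact det_rCirc_eq_prod_of_card_eq c hcard hS

/-- over an algebraically closed field, with `Xⁿ − r` separable and
`r ≠ 0`, the determinant of `circ_r(c₀,…,c_{n−1})` is the product of
`c₀ + c₁ω + ⋯ + c_{n−1}ω^{n−1}` over the `n`-th roots `ω` of `r`. -/
theorem det_rCirc_eq_prod_roots {F : Type*} [Field F] [IsAlgClosed F]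
    {n : ℕ} (hn : 0 < n) (r : F) (hr : r ≠ 0)
    (hsep : (X ^ n - C r : F[X]).Separable) (c : Fin n → F) :
    (rCirc r c).det =
      (((X ^ n - C r : F[X]).roots).map
        (fun ω => ∑ k : Fin n, c k * ω ^ (k : ℕ))).prod :=
  det_rCirc_eq_prod_roots_general r hsep c
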